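/- Let ≥_* be a preorder on ℝ^Ω satisfying conditions (i)–(v). Then for every bounded f : Ω → ℝ with f ≥ 0 pointwise, inf_{g ∈ [f]_*} sup_{ω∈Ω} g(ω) = inf_{N ∈ 𝒩_*} sup_{ω ∈ Ω \ N} f(ω). Consequently, for every family 𝓑 of subsets of Ω, I_*(𝓑) = I_{𝒩_*}(𝓑). -/

import Mathlib

/-- `sFun β = (1/|β|) ∑_{B ∈ β} 1_B` for a finite sequence (list) of sets `β`. -/
noncomputable def sFun {Ω : Type*} (β : List (Set Ω)) : Ω → ℝ := fun ω =>
  (β.map fun B => B.indicator (fun _ => (1 : ℝ)) ω).sum / β.length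

/-- A finitely additive probability on the algebra of all subsets of `Ω`. -/
def IsFAProbAll {Ω : Type*} (m : Set Ω → ℝ) : Prop :=
  (∀ A : Set Ω, 0 ≤ m A) ∧ m Set.univ = 1 ∧
    ∀ A B : Set Ω, Disjoint A B → m (A ∪ B) = m A + m B

/-- `f ≥ g` `m`-almost surely: `inf_{t > 0} m({f - g < -t}) = 0`. -/
def AlmostGE {Ω : Type*} (m : Set Ω → ℝ) (f g : Ω → ℝ) : Prop :=
  sInf {r | ∃ t : ℝ, 0 < t ∧ r = m {ω | f ω - g ω < -t}} = 0

/-- `𝒩_* = {A ⊆ Ω : 0 ≥_* 1_A}`, the null sets of the ranking `R` (where `R f g`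
stands for `f ≥_* g`). -/
def NstarSet {Ω : Type*} (R : (Ω → ℝ) → (Ω → ℝ) → Prop) : Set (Set Ω) :=
  {A : Set Ω | R 0 (A.indicator fun _ => (1 : ℝ))}

/-- Conditions (i)–(v) on the ranking `R` (where `R f g` stands for `f ≥_* g`):
(i) not `0 >_* 1`; (ii) `f ≥_* 0` and `a > 0` imply `f ⊓ a ≥_* 0`;
(iii) `f ≥ 0` pointwise implies `f ≥_* 0`; (iv) `f ≥_* g` implies
`b·f + h ≥_* b·g + h` for every bounded pointwise-positive `b` and every `h`;
(v) if `f + ε ≥_* 0` for all `ε > 0` then `f ≥_* 0`. -/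
def StarConds {Ω : Type*} (R : (Ω → ℝ) → (Ω → ℝ) → Prop) : Prop :=
  (¬ (R 0 1 ∧ ¬ R 1 0)) ∧
    (∀ f : Ω → ℝ, ∀ a : ℝ, R f 0 → 0 < a → R (fun ω => min (f ω) a) 0) ∧
    (∀ f : Ω → ℝ, 0 ≤ f → R f 0) ∧
    (∀ f g b h : Ω → ℝ, R f g → (∀ ω, 0 < b ω) → (∃ C : ℝ, ∀ ω, b ω ≤ C) →
      R (b * f + h) (b * g + h)) ∧
    (∀ f : Ω → ℝ, (∀ ε : ℝ, 0 < ε → R (f + fun _ => ε) 0) → R f 0)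

/-- `I_*(𝓑)`: the infimum, over nonempty finite sequences `β` from `𝓑` and over
`g` that are `≥_*`-equivalent to `s(β)`, of `sup_ω g(ω)` (computed in `EReal`). -/
noncomputable def interNumStar {Ω : Type*} (R : (Ω → ℝ) → (Ω → ℝ) → Prop)
    (𝓑 : Set (Set Ω)) : EReal :=
  sInf {r : EReal | ∃ β : List (Set Ω), β ≠ [] ∧ (∀ B ∈ β, B ∈ 𝓑) ∧
    ∃ g : Ω → ℝ, R g (sFun β) ∧ R (sFun β) g ∧ r = ⨆ ω, (g ω : EReal)}

/-- `I_𝒩(𝓑)`: the infimum over nonempty finite sequences `β` from `𝓑` and `N ∈ 𝒩`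
of `sup_{ω ∈ Ω \ N} s(β)(ω)` (computed in `EReal`). -/
noncomputable def interNumIdeal {Ω : Type*} (𝒩 𝓑 : Set (Set Ω)) : EReal :=
  sInf {r : EReal | ∃ β : List (Set Ω), β ≠ [] ∧ (∀ B ∈ β, B ∈ 𝓑) ∧
    ∃ N ∈ 𝒩, r = ⨆ ω ∈ Nᶜ, (sFun β ω : EReal)}

/-!
Both infima are essential suprema of `f`. If `N` is null, then `f - t·1_N` is `≥_*`-equivalent
to `f` for every `t > 0`, and for large `t` its supremum drops to that of `f` off `N`.
Conversely, if `g ≥_*`-dominates `f` and `g ≤ M < z`, then `{f > z}` is null: by (ii) and (iv)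
`min (g - f) (ε·s)` with `ε = z - M` lies pointwise below `ε·(s - (s + 1)·1_{f > z})`, so
`s - 1_{f > z} ≥_* 0` for every `s > 0`, and (v) turns this into `0 ≥_* 1_{f > z}`.
-/

open Set

section

variable {Ω : Type*}

noncomputable def essSupStar (R : (Ω → ℝ) → (Ω → ℝ) → Prop) (f : Ω → ℝ) : EReal :=
  sInf {r : EReal | ∃ g : Ω → ℝ, R g f ∧ R f g ∧ r = ⨆ ω, (g ω : EReal)}

noncomputable def essSupNull (𝒩 : Set (Set Ω)) (f : Ω → ℝ) : EReal :=
  sInf {r : EReal | ∃ N ∈ 𝒩, r = ⨆ ω ∈ Nᶜ, (f ω : EReal)}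

variable {R : (Ω → ℝ) → (Ω → ℝ) → Prop}

theorem essSupStar_le_iSup {f g : Ω → ℝ} (hgf : R g f) (hfg : R f g) :
    essSupStar R f ≤ ⨆ ω, (g ω : EReal) :=
  sInf_le ⟨g, hgf, hfg, rfl⟩

theorem essSupNull_le_iSup₂ {𝒩 : Set (Set Ω)} {N : Set Ω} (hN : N ∈ 𝒩) (f : Ω → ℝ) :
    essSupNull 𝒩 f ≤ ⨆ ω ∈ Nᶜ, (f ω : EReal) :=
  sInf_le ⟨N, hN, rfl⟩

namespace StarConds

variable (hc : StarConds R)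
include hc

theorem rel_of_le {p q : Ω → ℝ} (h : q ≤ p) : R p q := by
  have h4 := hc.2.2.2.1 (p - q) 0 1 q (hc.2.2.1 _ (sub_nonneg.2 h)) (fun _ => one_pos)
    ⟨1, fun _ => le_rfl⟩
  simpa using h4

theorem add_right {p q : Ω → ℝ} (h : R p q) (k : Ω → ℝ) : R (p + k) (q + k) := by
  simpa using hc.2.2.2.1 p q 1 k h (fun _ => one_pos) ⟨1, fun _ => le_rfl⟩

theorem smul {p q : Ω → ℝ} (h : R p q) {c : ℝ} (hc₀ : 0 < c) : R (c • p) (c • q) := by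
  have h4 := hc.2.2.2.1 p q (fun _ => c) 0 h (fun _ => hc₀) ⟨c, fun _ => le_rfl⟩
  convert h4 using 1 <;> ext ω <;> simp

theorem sub_smul_indicator_equiv {N : Set Ω} (hN : N ∈ NstarSet R) (f : Ω → ℝ) {t : ℝ}
    (ht : 0 < t) :
    R (f - t • N.indicator fun _ => 1) f ∧ R f (f - t • N.indicator fun _ => 1) := by
  refine ⟨?_, hc.rel_of_le ?_⟩
  · have h := hc.add_right (hc.smul hN ht) (f - t • N.indicator fun _ => 1)
    simpa using h
  · intro ω
    simpa using mul_nonneg ht.le (indicator_nonneg (fun _ _ => zero_le_one) ω)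

theorem setOf_lt_mem_nstarSet (htrans : Transitive R) {g f : Ω → ℝ} (hgf : R g f) {M z : ℝ}
    (hgM : ∀ ω, g ω ≤ M) (hMz : M < z) : {ω | z < f ω} ∈ NstarSet R := by
  set χ : Ω → ℝ := {ω | z < f ω}.indicator fun _ => 1
  set ε := z - M
  have hε : 0 < ε := sub_pos.2 hMz
  have hχ : 0 ≤ χ := indicator_nonneg fun _ _ => zero_le_one
  have hdiff : R (g - f) 0 := by simpa [sub_eq_add_neg] using hc.add_right hgf (-f)
  have hshift : ∀ s : ℝ, 0 < s → R (-χ + fun _ => s) 0 := by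
    intro s hs
    have hmin := hc.2.1 _ (ε * s) hdiff (mul_pos hε hs)
    have hbound : (fun ω => min ((g - f) ω) (ε * s)) ≤ ε • ((fun _ => s) - (s + 1) • χ) := by
      intro ω
      by_cases hω : z < f ω
      · have : g ω - f ω ≤ -ε := by linarith [hgM ω]
        simpa [χ, hω, mul_add] using min_le_of_left_le this
      · simp [χ, hω]
    have hscaled := hc.smul (htrans (hc.rel_of_le hbound) hmin) (inv_pos.2 hε)
    rw [smul_zero, inv_smul_smul₀ hε.ne'] at hscaled
    refine htrans (hc.rel_of_le fun ω => ?_) hscaled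
    simp only [Pi.add_apply, Pi.sub_apply, Pi.smul_apply, Pi.neg_apply, smul_eq_mul]
    nlinarith [mul_nonneg hs.le (hχ ω)]
  simpa [NstarSet] using hc.add_right (hc.2.2.2.2 _ hshift) χ

theorem essSupStar_le_essSupNull {f : Ω → ℝ} {C : ℝ} (hfC : ∀ ω, f ω ≤ C) :
    essSupStar R f ≤ essSupNull (NstarSet R) f := by
  refine le_sInf ?_
  rintro _ ⟨N, hN, rfl⟩
  rw [← EReal.le_of_forall_lt_iff_le]
  intro y hy
  set t := max 1 (C - y)
  have ht : 0 < t := lt_of_lt_of_le one_pos (le_max_left _ _)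
  obtain ⟨hgf, hfg⟩ := hc.sub_smul_indicator_equiv hN f ht
  refine (essSupStar_le_iSup hgf hfg).trans (iSup_le fun ω => ?_)
  by_cases hω : ω ∈ N
  · have : f ω - t ≤ y := by linarith [hfC ω, le_max_right 1 (C - y)]
    simp only [Pi.sub_apply, Pi.smul_apply, indicator_of_mem hω, smul_eq_mul, mul_one]
    exact_mod_cast this
  · have : (f ω : EReal) ≤ ⨆ ω ∈ Nᶜ, (f ω : EReal) := le_iSup₂_of_le ω hω le_rfl
    simpa [hω] using this.trans hy.le

theorem essSupNull_le_essSupStar (htrans : Transitive R) (f : Ω → ℝ) :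
    essSupNull (NstarSet R) f ≤ essSupStar R f := by
  refine le_sInf ?_
  rintro _ ⟨g, hgf, -, rfl⟩
  rw [← EReal.le_of_forall_lt_iff_le]
  intro z hz
  obtain ⟨M, hgM, hMz⟩ := EReal.lt_iff_exists_real_btwn.1 hz
  have hgM' : ∀ ω, g ω ≤ M := fun ω => EReal.coe_le_coe_iff.1 ((le_iSup _ ω).trans hgM.le)
  have hN := hc.setOf_lt_mem_nstarSet htrans hgf hgM' (EReal.coe_lt_coe_iff.1 hMz)
  refine (essSupNull_le_iSup₂ hN f).trans (iSup₂_le fun ω hω => ?_)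
  exact EReal.coe_le_coe_iff.2 (not_lt.1 hω)

theorem essSupStar_eq_essSupNull (htrans : Transitive R) {f : Ω → ℝ} {C : ℝ}
    (hfC : ∀ ω, f ω ≤ C) : essSupStar R f = essSupNull (NstarSet R) f :=
  le_antisymm (hc.essSupStar_le_essSupNull hfC) (hc.essSupNull_le_essSupStar htrans f)

end StarConds

theorem sFun_le_one (β : List (Set Ω)) (ω : Ω) : sFun β ω ≤ 1 := by
  refine div_le_one_of_le₀ ?_ (Nat.cast_nonneg _)
  simpa using List.sum_le_card_nsmul (β.map fun B => B.indicator (fun _ => (1 : ℝ)) ω) 1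
    (by simp only [List.mem_map]; rintro _ ⟨B, -, rfl⟩; by_cases hω : ω ∈ B <;> simp [hω])

theorem interNumStar_eq_iInf (𝓑 : Set (Set Ω)) :
    interNumStar R 𝓑 = ⨅ (β : List (Set Ω)) (_ : β ≠ [] ∧ ∀ B ∈ β, B ∈ 𝓑),
      essSupStar R (sFun β) := by
  refine le_antisymm (le_iInf₂ fun β hβ => sInf_le_sInf ?_) (le_sInf ?_)
  · rintro _ ⟨g, hg, hg', rfl⟩
    exact ⟨β, hβ.1, hβ.2, g, hg, hg', rfl⟩
  · rintro _ ⟨β, hβ, hβ𝓑, g, hg, hg', rfl⟩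
    exact iInf₂_le_of_le β ⟨hβ, hβ𝓑⟩ (essSupStar_le_iSup hg hg')

theorem interNumIdeal_eq_iInf (𝒩 𝓑 : Set (Set Ω)) :
    interNumIdeal 𝒩 𝓑 = ⨅ (β : List (Set Ω)) (_ : β ≠ [] ∧ ∀ B ∈ β, B ∈ 𝓑),
      essSupNull 𝒩 (sFun β) := by
  refine le_antisymm (le_iInf₂ fun β hβ => sInf_le_sInf ?_) (le_sInf ?_)
  · rintro _ ⟨N, hN, rfl⟩
    exact ⟨β, hβ.1, hβ.2, N, hN, rfl⟩
  · rintro _ ⟨β, hβ, hβ𝓑, N, hN, rfl⟩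
    exact iInf₂_le_of_le β ⟨hβ, hβ𝓑⟩ (essSupNull_le_iSup₂ hN _)

end

theorem interNumStar_eq_interNumIdeal_general {Ω : Type*}
    (R : (Ω → ℝ) → (Ω → ℝ) → Prop) (htrans : Transitive R)
    (hc : StarConds R) :
    (∀ f : Ω → ℝ, (∃ C : ℝ, ∀ ω, |f ω| ≤ C) → 0 ≤ f →
      sInf {r : EReal | ∃ g : Ω → ℝ, R g f ∧ R f g ∧ r = ⨆ ω, (g ω : EReal)} =
        sInf {r : EReal | ∃ N ∈ NstarSet R, r = ⨆ ω ∈ Nᶜ, (f ω : EReal)}) ∧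
      ∀ 𝓑 : Set (Set Ω), interNumStar R 𝓑 = interNumIdeal (NstarSet R) 𝓑 := by
  refine ⟨fun f ⟨C, hC⟩ _ =>
    hc.essSupStar_eq_essSupNull htrans fun ω => (le_abs_self _).trans (hC ω), fun 𝓑 => ?_⟩
  rw [interNumStar_eq_iInf, interNumIdeal_eq_iInf]
  simp_rw [hc.essSupStar_eq_essSupNull htrans (sFun_le_one _)]

/-- If `≥_*` satisfies (i)–(v) then, for every bounded nonnegative `f`,
`inf_{g ∈ [f]_*} sup_ω g(ω) = inf_{N ∈ 𝒩_*} sup_{ω ∈ Ω \ N} f(ω)`; consequently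
`I_* = I_{𝒩_*}` on every family `𝓑` of subsets of `Ω`. -/
theorem interNumStar_eq_interNumIdeal {Ω : Type*} [Nonempty Ω]
    (R : (Ω → ℝ) → (Ω → ℝ) → Prop) (hrefl : Reflexive R) (htrans : Transitive R)
    (hc : StarConds R) :
    (∀ f : Ω → ℝ, (∃ C : ℝ, ∀ ω, |f ω| ≤ C) → 0 ≤ f →
      sInf {r : EReal | ∃ g : Ω → ℝ, R g f ∧ R f g ∧ r = ⨆ ω, (g ω : EReal)} =
        sInf {r : EReal | ∃ N ∈ NstarSet R, r = ⨆ ω ∈ Nᶜ, (f ω : EReal)}) ∧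
      ∀ 𝓑 : Set (Set Ω), interNumStar R 𝓑 = interNumIdeal (NstarSet R) 𝓑 :=
  interNumStar_eq_interNumIdeal_general R htrans hc
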